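/- arXiv:2604.01697 — 3 statements merged into one kernel-verified Lean document; each statement's English description precedes it below -/
import Mathlib

section
/- Let G be a group, let a, b ∈ G, and let n ≥ 1 be a natural number. Then the element (ab)^{2n} · a^{-2n} · b^{-2n} can be written as a product of n commutators; that is, there exist x₁, …, xₙ, y₁, …, yₙ ∈ G such that (ab)^{2n} a^{-2n} b^{-2n} = [x₁,y₁][x₂,y₂]⋯[xₙ,yₙ]. -/
/-!
Writing `P n = (ab)^(2n) a^(-2n) b^(-2n)`, one has
`P (n + 1) = g P n g⁻¹ ⁅aba, b^(2n+1) a⁻¹⁆` with `g = abab`. Since a conjugate of a product of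
`n` commutators is again one, induction on `n` adds one commutator per step.
-/

open scoped commutatorElement

def IsProdCommutators {G : Type*} [Group G] (n : ℕ) (g : G) : Prop :=
  ∃ x y : Fin n → G, g = (List.ofFn fun i => ⁅x i, y i⁆).prod

namespace IsProdCommutators

variable {G H : Type*} [Group G] [Group H] {n : ℕ} {g : G}

theorem one : IsProdCommutators 0 (1 : G) :=
  ⟨Fin.elim0, Fin.elim0, rfl⟩

theorem map (h : IsProdCommutators n g) (f : G →* H) : IsProdCommutators n (f g) := by
  obtain ⟨x, y, rfl⟩ := h
  refine ⟨f ∘ x, f ∘ y, ?_⟩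
  simp [map_list_prod, List.map_ofFn, Function.comp_def, map_commutatorElement]

theorem conj (h : IsProdCommutators n g) (k : G) : IsProdCommutators n (k * g * k⁻¹) :=
  h.map (MulAut.conj k).toMonoidHom

theorem mul_commutatorElement (h : IsProdCommutators n g) (c d : G) :
    IsProdCommutators (n + 1) (g * ⁅c, d⁆) := by
  obtain ⟨x, y, rfl⟩ := h
  refine ⟨Fin.snoc x c, Fin.snoc y d, ?_⟩
  rw [List.ofFn_succ']
  simp

end IsProdCommutators

section

variable {G : Type*} [Group G] (a b : G)

theorem mul_pow_two_mul_succ_mul_inv_pow (n : ℕ) :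
    (a * b) ^ (2 * (n + 1)) * (a ^ (2 * (n + 1)))⁻¹ * (b ^ (2 * (n + 1)))⁻¹ =
      (a * b * a * b) * ((a * b) ^ (2 * n) * (a ^ (2 * n))⁻¹ * (b ^ (2 * n))⁻¹) *
        (a * b * a * b)⁻¹ * ⁅a * b * a, b ^ (2 * n + 1) * a⁻¹⁆ := by
  have hab : (a * b) ^ (2 * (n + 1)) = a * b * a * b * (a * b) ^ (2 * n) := by
    rw [mul_add, mul_one, pow_add, pow_mul_comm, pow_two]
    simp only [mul_assoc]
  rw [hab, commutatorElement_def]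
  group

theorem isProdCommutators_mul_pow_two_mul_inv_pow (n : ℕ) :
    IsProdCommutators n ((a * b) ^ (2 * n) * (a ^ (2 * n))⁻¹ * (b ^ (2 * n))⁻¹) := by
  induction n with
  | zero => simpa using IsProdCommutators.one
  | succ n ih =>
    rw [mul_pow_two_mul_succ_mul_inv_pow]
    exact (ih.conj _).mul_commutatorElement _ _

end

theorem prod_pow_two_mul_inv_pow_eq_prod_commutators_general
    {G : Type*} [Group G] (a b : G) (n : ℕ) :
    ∃ x y : Fin n → G,
      (a * b) ^ (2 * n) * (a ^ (2 * n))⁻¹ * (b ^ (2 * n))⁻¹ =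
        (List.ofFn fun i => ⁅x i, y i⁆).prod :=
  isProdCommutators_mul_pow_two_mul_inv_pow a b n

/-- For a group `G`, elements `a b : G`, and `n ≥ 1`, the element
`(ab)^(2n) * a^(-2n) * b^(-2n)` is a product of `n` commutators. -/
theorem prod_pow_two_mul_inv_pow_eq_prod_commutators
    {G : Type*} [Group G] (a b : G) (n : ℕ) (hn : 1 ≤ n) :
    ∃ x y : Fin n → G,
      (a * b) ^ (2 * n) * (a ^ (2 * n))⁻¹ * (b ^ (2 * n))⁻¹ =
        (List.ofFn fun i => ⁅x i, y i⁆).prod :=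
  prod_pow_two_mul_inv_pow_eq_prod_commutators_general a b n
end

section
/- Let G be a group, let a, b ∈ G, and let n ≥ 1, p, q be natural numbers. If a^{2n} is a product of p commutators in G and b^{2n} is a product of q commutators in G, then (ab)^{2n} is a product of n + p + q commutators in G. -/
/-!
Put `Zₙ = (ab)^(2n) b^(-2n) a^(-2n)`, so that `(ab)^(2n) = Zₙ a^(2n) b^(2n)`. Writing
`v = (ab)^(2n)` and using that `v` commutes with `ab`, one checks the identity
`Zₙ₊₁ = a² Zₙ a⁻² · c ⁅a⁻¹b, va⁆ c⁻¹` for an explicit `c`. Since being a product of `k`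
commutators is invariant under conjugation, `Zₙ` is a product of `n` commutators by induction,
and the theorem follows by concatenating with the given expressions for `a^(2n)` and `b^(2n)`.
-/

open scoped commutatorElement

/-- `g` is a product of `k` commutators in `G`. -/
def IsProductOfCommutators {G : Type*} [Group G] (k : ℕ) (g : G) : Prop :=
  ∃ x y : Fin k → G, g = (List.ofFn fun i => ⁅x i, y i⁆).prod

namespace IsProductOfCommutators

variable {G : Type*} [Group G]

theorem one : IsProductOfCommutators 0 (1 : G) :=
  ⟨Fin.elim0, Fin.elim0, by simp⟩

theorem commutatorElement (x y : G) : IsProductOfCommutators 1 ⁅x, y⁆ :=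
  ⟨fun _ => x, fun _ => y, by simp⟩

theorem mul {j k : ℕ} {g h : G} (hg : IsProductOfCommutators j g)
    (hh : IsProductOfCommutators k h) : IsProductOfCommutators (j + k) (g * h) := by
  obtain ⟨x, y, rfl⟩ := hg
  obtain ⟨x', y', rfl⟩ := hh
  refine ⟨Fin.append x x', Fin.append y y', ?_⟩
  rw [List.ofFn_add]
  simp

theorem conj {k : ℕ} {g : G} (c : G) (hg : IsProductOfCommutators k g) :
    IsProductOfCommutators k (c * g * c⁻¹) := by
  obtain ⟨x, y, rfl⟩ := hg
  refine ⟨fun i => MulAut.conj c (x i), fun i => MulAut.conj c (y i), ?_⟩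
  rw [← MulAut.conj_apply, map_list_prod, List.map_ofFn]
  simp [Function.comp_def, map_commutatorElement]

end IsProductOfCommutators

section

variable {G : Type*} [Group G]

theorem mul_pow_two_mul_div_div_succ (a b : G) (n : ℕ) :
    (a * b) ^ (2 * (n + 1)) / b ^ (2 * (n + 1)) / a ^ (2 * (n + 1)) =
      a ^ 2 * ((a * b) ^ (2 * n) / b ^ (2 * n) / a ^ (2 * n)) * (a ^ 2)⁻¹ *
        (a ^ (2 * n + 2) * b ^ (2 * n) / (a * b) ^ (2 * n) * ⁅a⁻¹ * b, (a * b) ^ (2 * n) * a⁆ *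
          (a ^ (2 * n + 2) * b ^ (2 * n) / (a * b) ^ (2 * n))⁻¹) := by
  rw [show 2 * (n + 1) = 1 + 2 * n + 1 by ring, pow_succ, pow_add, pow_one]
  generalize (a * b) ^ (2 * n) = v
  simp only [commutatorElement_def, div_eq_mul_inv]
  group

theorem isProductOfCommutators_mul_pow_two_mul_div_div (a b : G) :
    ∀ n : ℕ, IsProductOfCommutators n ((a * b) ^ (2 * n) / b ^ (2 * n) / a ^ (2 * n))
  | 0 => by simpa using IsProductOfCommutators.one
  | n + 1 => by
    rw [mul_pow_two_mul_div_div_succ]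
    exact ((isProductOfCommutators_mul_pow_two_mul_div_div a b n).conj _).mul
      ((IsProductOfCommutators.commutatorElement _ _).conj _)

end

theorem isProductOfCommutators_mul_pow_two_mul_general
    {G : Type*} [Group G] (a b : G) (n p q : ℕ)
    (ha : IsProductOfCommutators p (a ^ (2 * n)))
    (hb : IsProductOfCommutators q (b ^ (2 * n))) :
    IsProductOfCommutators (n + p + q) ((a * b) ^ (2 * n)) := by
  have h := ((isProductOfCommutators_mul_pow_two_mul_div_div a b n).mul ha).mul hb
  rwa [div_mul_cancel, div_mul_cancel] at h

/-- If `a^(2n)` is a product of `p` commutators and `b^(2n)` is a product of `q`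
commutators, then `(ab)^(2n)` is a product of `n + p + q` commutators. -/
theorem isProductOfCommutators_mul_pow_two_mul
    {G : Type*} [Group G] (a b : G) (n p q : ℕ) (hn : 1 ≤ n)
    (ha : IsProductOfCommutators p (a ^ (2 * n)))
    (hb : IsProductOfCommutators q (b ^ (2 * n))) :
    IsProductOfCommutators (n + p + q) ((a * b) ^ (2 * n)) :=
  isProductOfCommutators_mul_pow_two_mul_general a b n p q ha hb
end

section
/- Let τ, a, b, c, d be complex numbers with ad − bc = 1, and consider the matrices X = [[1, τ],[0, 1]] and Y = [[a, b],[c, d]] in SL(2, ℂ). Then for every integer m, the trace of X^{1−m} · Y · X^{m} · Y^{-1} equals 2 + c²·m·(m−1)·τ². -/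
lemma pow_parabolic_nat (τ : ℂ) (X : Matrix.SpecialLinearGroup (Fin 2) ℂ)
    (hX : (X : Matrix (Fin 2) (Fin 2) ℂ) = !![1, τ; 0, 1]) (n : ℕ) :
    ((X ^ n : Matrix.SpecialLinearGroup (Fin 2) ℂ) : Matrix (Fin 2) (Fin 2) ℂ)
      = !![1, (n : ℂ) * τ; 0, 1] := by
  induction n with
  | zero => simp [Matrix.one_fin_two]
  | succ k ih =>
    rw [pow_succ, Matrix.SpecialLinearGroup.coe_mul, ih, hX]
    push_cast
    ext i j
    fin_cases i <;> fin_cases j <;>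
      simp [Matrix.mul_apply, Fin.sum_univ_succ] <;> ring

lemma pow_parabolic_int (τ : ℂ) (X : Matrix.SpecialLinearGroup (Fin 2) ℂ)
    (hX : (X : Matrix (Fin 2) (Fin 2) ℂ) = !![1, τ; 0, 1]) (k : ℤ) :
    ((X ^ k : Matrix.SpecialLinearGroup (Fin 2) ℂ) : Matrix (Fin 2) (Fin 2) ℂ)
      = !![1, (k : ℂ) * τ; 0, 1] := by
  cases k with
  | ofNat n => rw [Int.ofNat_eq_coe, zpow_natCast, pow_parabolic_nat τ X hX n]; norm_num
  | negSucc n =>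
    rw [zpow_negSucc, Matrix.SpecialLinearGroup.coe_inv,
      pow_parabolic_nat τ X hX (n + 1), Matrix.adjugate_fin_two]
    simp
    push_cast
    ring

/-- For `X = [[1, τ],[0, 1]]` and `Y = [[a, b],[c, d]]` in `SL(2, ℂ)` (with
`ad - bc = 1`), the trace of `X^(1-m) * Y * X^m * Y⁻¹` is `2 + c² m (m-1) τ²`. -/
theorem trace_conj_parabolic_word
    (τ a b c d : ℂ) (h : a * d - b * c = 1)
    (X Y : Matrix.SpecialLinearGroup (Fin 2) ℂ)
    (hX : (X : Matrix (Fin 2) (Fin 2) ℂ) = !![1, τ; 0, 1])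
    (hY : (Y : Matrix (Fin 2) (Fin 2) ℂ) = !![a, b; c, d])
    (m : ℤ) :
    ((X ^ (1 - m) * Y * X ^ m * Y⁻¹ : Matrix.SpecialLinearGroup (Fin 2) ℂ) :
        Matrix (Fin 2) (Fin 2) ℂ).trace =
      2 + c ^ 2 * (m : ℂ) * ((m : ℂ) - 1) * τ ^ 2 := by
  have hinv : ((Y⁻¹ : Matrix.SpecialLinearGroup (Fin 2) ℂ) : Matrix (Fin 2) (Fin 2) ℂ)
      = !![d, -b; -c, a] := by
    rw [Matrix.SpecialLinearGroup.coe_inv, hY, Matrix.adjugate_fin_two]; simp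
  rw [Matrix.SpecialLinearGroup.coe_mul, Matrix.SpecialLinearGroup.coe_mul,
    Matrix.SpecialLinearGroup.coe_mul, pow_parabolic_int τ X hX,
    pow_parabolic_int τ X hX, hY, hinv]
  push_cast
  simp [Matrix.trace_fin_two, Matrix.mul_apply, Fin.sum_univ_succ]
  linear_combination 2 * h
end
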